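/- arXiv:1911.08679 — 4 statements merged into one kernel-verified Lean document; each statement's English description precedes it below -/
import Mathlib

section
/- C²[a,b] is a differential subalgebra of order 1/2 in C[a,b]: there exists D₀ > 0 such that for all f, g ∈ C²[a,b], ‖fg‖_{C²} ≤ D₀ ‖f‖_{C²} ‖g‖_{C²} ((‖f‖_{C⁰}/‖f‖_{C²})^{1/2} + (‖g‖_{C⁰}/‖g‖_{C²})^{1/2}). -/
/-!
Landau–Kolmogorov on the interval: the mean value theorem on a subinterval of length `t ≤ b - a`
containing `x` gives `|f' x| ≤ 2 ‖f‖ / t + ‖f''‖ t`, and the choice `t = (b - a) √(‖f‖ / ‖f‖_{C²})`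
yields `‖f'‖ ≤ K ‖f‖_{C²} √(‖f‖ / ‖f‖_{C²})` with `K = 2 / (b - a) + (b - a)`. The Leibniz rule
gives `‖fg‖_{C²} ≤ ‖f‖_{C²} ‖g‖ + ‖f‖ ‖g‖_{C²} + 2 ‖f'‖ ‖g'‖`; since also
`‖f‖ ≤ ‖f‖_{C²} √(‖f‖ / ‖f‖_{C²})`, every term is bounded as claimed, with `D₀ = 1 + 2 K²`.
-/

open Set

noncomputable def normC0 (a b : ℝ) (f : ℝ → ℝ) : ℝ :=
  ⨆ t : Icc a b, |f t.1|

noncomputable def normC2 (a b : ℝ) (f : ℝ → ℝ) : ℝ :=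
  normC0 a b f + normC0 a b (derivWithin f (Icc a b)) +
    normC0 a b (derivWithin (derivWithin f (Icc a b)) (Icc a b))

open Filter Topology

lemma le_mul_sqrt_div_self {x M : ℝ} (hx : 0 ≤ x) (hxM : x ≤ M) : x ≤ M * √(x / M) := by
  rcases hx.trans hxM |>.eq_or_lt with hM | hM
  · subst hM; linarith
  calc x = M * (x / M) := by field_simp
    _ ≤ M * √(x / M) := by
      gcongr
      rw [Real.le_sqrt (by positivity) (by positivity)]
      nlinarith [div_nonneg hx hM.le, (div_le_one hM).2 hxM]

lemma nonpos_of_forall_le_mul {x B L : ℝ} (hL : 0 < L)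
    (h : ∀ t, 0 < t → t ≤ L → x ≤ B * t) : x ≤ 0 := by
  have hlim : Tendsto (fun t => B * t) (𝓝[>] 0) (𝓝 0) := by
    simpa using (tendsto_id.const_mul B).mono_left (nhdsWithin_le_nhds (a := (0:ℝ)))
  refine ge_of_tendsto hlim ?_
  filter_upwards [Ioc_mem_nhdsGT hL] with t ht using h t ht.1 ht.2

lemma le_mul_mul_sqrt_div_of_forall_le {x A B M L : ℝ} (hA : 0 ≤ A) (hAM : A ≤ M)
    (hB : B ≤ M) (hL : 0 < L) (h : ∀ t, 0 < t → t ≤ L → x ≤ 2 * A / t + B * t) :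
    x ≤ (2 / L + L) * M * √(A / M) := by
  rcases hA.eq_or_lt with rfl | hA
  · simpa using nonpos_of_forall_le_mul hL fun t ht htL => by simpa using h t ht htL
  have hM : 0 < M := hA.trans_le hAM
  set s := √(A / M) with hs
  have hs0 : 0 < s := Real.sqrt_pos.2 (by positivity)
  have hs1 : s ≤ 1 := Real.sqrt_le_one.2 ((div_le_one hM).2 hAM)
  have hAs : A = M * s ^ 2 := by rw [hs, Real.sq_sqrt (by positivity)]; field_simp
  calc x ≤ 2 * A / (L * s) + B * (L * s) := h _ (by positivity) (by nlinarith)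
    _ ≤ 2 * A / (L * s) + M * (L * s) := by gcongr
    _ = (2 / L + L) * M * s := by rw [hAs]; field_simp

lemma add_add_two_mul_le_mul_add_sqrt_div {F G F₀ G₀ F₁ G₁ K : ℝ} (hK : 0 ≤ K)
    (hF₀ : 0 ≤ F₀) (hF₀F : F₀ ≤ F) (hG₀ : 0 ≤ G₀) (hG₀G : G₀ ≤ G)
    (hF₁ : F₁ ≤ K * F * √(F₀ / F)) (hG₁ : 0 ≤ G₁) (hG₁K : G₁ ≤ K * G * √(G₀ / G)) :
    F * G₀ + F₀ * G + 2 * (F₁ * G₁) ≤ (1 + 2 * K ^ 2) * F * G * (√(F₀ / F) + √(G₀ / G)) := by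
  set s := √(F₀ / F)
  set r := √(G₀ / G)
  have hF : 0 ≤ F := hF₀.trans hF₀F
  have hG : 0 ≤ G := hG₀.trans hG₀G
  have hr : 0 ≤ r := Real.sqrt_nonneg _
  have hr1 : r ≤ 1 := Real.sqrt_le_one.2 (div_le_one_of_le₀ hG₀G hG)
  have h₁ : F * G₀ ≤ F * G * r := by
    rw [mul_assoc]; exact mul_le_mul_of_nonneg_left (le_mul_sqrt_div_self hG₀ hG₀G) hF
  have h₂ : F₀ * G ≤ F * G * s := by
    rw [mul_right_comm]; exact mul_le_mul_of_nonneg_right (le_mul_sqrt_div_self hF₀ hF₀F) hG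
  have h₃ : F₁ * G₁ ≤ K ^ 2 * (F * G) * s := by
    calc F₁ * G₁ ≤ (K * F * s) * (K * G * r) := mul_le_mul hF₁ hG₁K hG₁ (by positivity)
      _ = K ^ 2 * (F * G) * s * r := by ring
      _ ≤ K ^ 2 * (F * G) * s := mul_le_of_le_one_right (by positivity) hr1
  nlinarith [mul_nonneg (mul_nonneg (sq_nonneg K) (mul_nonneg hF hG)) hr]

section NormC0

variable {a b : ℝ} {f g : ℝ → ℝ}

lemma normC0_nonneg : 0 ≤ normC0 a b f :=
  Real.iSup_nonneg fun _ => abs_nonneg _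

lemma normC0_le (hab : a ≤ b) {M : ℝ} (h : ∀ x ∈ Icc a b, |f x| ≤ M) : normC0 a b f ≤ M :=
  Real.iSup_le (fun t => h t.1 t.2) ((abs_nonneg _).trans (h a (left_mem_Icc.2 hab)))

lemma abs_le_normC0 (hf : ContinuousOn f (Icc a b)) {x : ℝ} (hx : x ∈ Icc a b) :
    |f x| ≤ normC0 a b f := by
  refine le_ciSup (f := fun t : Icc a b => |f t.1|) ?_ ⟨x, hx⟩
  rw [← image_eq_range (fun y => |f y|)]
  exact (isCompact_Icc.image_of_continuousOn hf.abs).bddAbove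

lemma abs_mul_le_normC0_mul (hf : ContinuousOn f (Icc a b)) (hg : ContinuousOn g (Icc a b))
    {x : ℝ} (hx : x ∈ Icc a b) : |f x * g x| ≤ normC0 a b f * normC0 a b g := by
  rw [abs_mul]
  exact mul_le_mul (abs_le_normC0 hf hx) (abs_le_normC0 hg hx) (abs_nonneg _) normC0_nonneg

lemma normC0_le_normC2 : normC0 a b f ≤ normC2 a b f := by
  unfold normC2
  linarith [normC0_nonneg (a := a) (b := b) (f := derivWithin f (Icc a b)),
    normC0_nonneg (a := a) (b := b) (f := derivWithin (derivWithin f (Icc a b)) (Icc a b))]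

lemma normC0_derivWithin_derivWithin_le_normC2 :
    normC0 a b (derivWithin (derivWithin f (Icc a b)) (Icc a b)) ≤ normC2 a b f := by
  unfold normC2
  linarith [normC0_nonneg (a := a) (b := b) (f := f),
    normC0_nonneg (a := a) (b := b) (f := derivWithin f (Icc a b))]

end NormC0

section ContDiffOnIcc

variable {a b : ℝ} {f g : ℝ → ℝ}

lemma ContDiffOn.contDiffOn_derivWithin_Icc (hab : a < b) (hf : ContDiffOn ℝ 2 f (Icc a b)) :
    ContDiffOn ℝ 1 (derivWithin f (Icc a b)) (Icc a b) :=
  hf.derivWithin (uniqueDiffOn_Icc hab) (by norm_num)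

lemma ContDiffOn.continuousOn_derivWithin_derivWithin_Icc (hab : a < b)
    (hf : ContDiffOn ℝ 2 f (Icc a b)) :
    ContinuousOn (derivWithin (derivWithin f (Icc a b)) (Icc a b)) (Icc a b) :=
  (hf.contDiffOn_derivWithin_Icc hab).continuousOn_derivWithin (uniqueDiffOn_Icc hab) le_rfl

lemma exists_abs_sub_le_abs_derivWithin_le (hf : DifferentiableOn ℝ f (Icc a b)) {x t : ℝ}
    (hx : x ∈ Icc a b) (ht : 0 < t) (htab : t ≤ b - a) :
    ∃ ξ ∈ Icc a b, |x - ξ| ≤ t ∧ |derivWithin f (Icc a b) ξ| ≤ 2 * normC0 a b f / t := by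
  set c := min x (b - t)
  have hac : a ≤ c := le_min hx.1 (by linarith)
  have hcb : c + t ≤ b := by linarith [min_le_right x (b - t)]
  have hxc : x ≤ c + t := by
    rcases min_choice x (b - t) with h | h <;> simp only [c, h] <;> linarith [hx.2]
  have hsub : Icc c (c + t) ⊆ Icc a b := Icc_subset_Icc hac hcb
  obtain ⟨ξ, hξ, hslope⟩ := exists_hasDerivAt_eq_slope f (derivWithin f (Icc a b))
    (by linarith : c < c + t) (hf.continuousOn.mono hsub) fun y hy =>
      (hf y (hsub (Ioo_subset_Icc_self hy))).hasDerivWithinAt.hasDerivAt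
        (Icc_mem_nhds (by linarith [hy.1]) (by linarith [hy.2]))
  refine ⟨ξ, hsub (Ioo_subset_Icc_self hξ), abs_le.2 ⟨?_, ?_⟩, ?_⟩
  · linarith [hξ.2, min_le_left x (b - t)]
  · linarith [hξ.1]
  · rw [hslope, add_sub_cancel_left, abs_div, abs_of_pos ht]
    gcongr
    linarith [abs_sub (f (c + t)) (f c),
      abs_le_normC0 hf.continuousOn (hsub (right_mem_Icc.2 (by linarith))),
      abs_le_normC0 hf.continuousOn (hsub (left_mem_Icc.2 (by linarith)))]

lemma abs_derivWithin_le_of_contDiffOn (hab : a < b) (hf : ContDiffOn ℝ 2 f (Icc a b))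
    {x t : ℝ} (hx : x ∈ Icc a b) (ht : 0 < t) (htab : t ≤ b - a) :
    |derivWithin f (Icc a b) x| ≤
      2 * normC0 a b f / t + normC0 a b (derivWithin (derivWithin f (Icc a b)) (Icc a b)) * t := by
  obtain ⟨ξ, hξ, hxξ, hderiv⟩ :=
    exists_abs_sub_le_abs_derivWithin_le (hf.differentiableOn two_ne_zero) hx ht htab
  have hlip := (convex_Icc a b).norm_image_sub_le_of_norm_derivWithin_le
    ((hf.contDiffOn_derivWithin_Icc hab).differentiableOn one_ne_zero)
    (fun y hy => abs_le_normC0 (hf.continuousOn_derivWithin_derivWithin_Icc hab) hy) hξ hx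
  rw [Real.norm_eq_abs, Real.norm_eq_abs] at hlip
  calc |derivWithin f (Icc a b) x|
      ≤ |derivWithin f (Icc a b) ξ| + |derivWithin f (Icc a b) x - derivWithin f (Icc a b) ξ| :=
        sub_le_iff_le_add'.1 (abs_sub_abs_le_abs_sub _ _)
    _ ≤ _ := add_le_add hderiv (hlip.trans (mul_le_mul_of_nonneg_left hxξ normC0_nonneg))

lemma normC0_derivWithin_le (hab : a < b) (hf : ContDiffOn ℝ 2 f (Icc a b)) :
    normC0 a b (derivWithin f (Icc a b)) ≤
      (2 / (b - a) + (b - a)) * normC2 a b f * √(normC0 a b f / normC2 a b f) :=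
  le_mul_mul_sqrt_div_of_forall_le normC0_nonneg normC0_le_normC2
    normC0_derivWithin_derivWithin_le_normC2 (sub_pos.2 hab) fun _ ht htab =>
      normC0_le hab.le fun _ hx => abs_derivWithin_le_of_contDiffOn hab hf hx ht htab

lemma derivWithin_derivWithin_mul (hab : a < b) (hf : ContDiffOn ℝ 2 f (Icc a b))
    (hg : ContDiffOn ℝ 2 g (Icc a b)) {x : ℝ} (hx : x ∈ Icc a b) :
    derivWithin (derivWithin (f * g) (Icc a b)) (Icc a b) x =
      derivWithin (derivWithin f (Icc a b)) (Icc a b) x * g x +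
      2 * (derivWithin f (Icc a b) x * derivWithin g (Icc a b) x) +
      f x * derivWithin (derivWithin g (Icc a b)) (Icc a b) x := by
  have hf₁ := hf.differentiableOn two_ne_zero
  have hg₁ := hg.differentiableOn two_ne_zero
  have hf₂ := (hf.contDiffOn_derivWithin_Icc hab).differentiableOn one_ne_zero
  have hg₂ := (hg.contDiffOn_derivWithin_Icc hab).differentiableOn one_ne_zero
  have hleibniz : EqOn (derivWithin (f * g) (Icc a b))
      (derivWithin f (Icc a b) * g + f * derivWithin g (Icc a b)) (Icc a b) :=
    fun y hy => derivWithin_mul (hf₁ y hy) (hg₁ y hy)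
  rw [derivWithin_congr hleibniz (hleibniz hx),
    derivWithin_add ((hf₂ x hx).mul (hg₁ x hx)) ((hf₁ x hx).mul (hg₂ x hx)),
    derivWithin_mul (hf₂ x hx) (hg₁ x hx), derivWithin_mul (hf₁ x hx) (hg₂ x hx)]
  ring

lemma normC2_mul_le (hab : a < b) (hf : ContDiffOn ℝ 2 f (Icc a b))
    (hg : ContDiffOn ℝ 2 g (Icc a b)) :
    normC2 a b (f * g) ≤ normC2 a b f * normC0 a b g + normC0 a b f * normC2 a b g +
      2 * (normC0 a b (derivWithin f (Icc a b)) * normC0 a b (derivWithin g (Icc a b))) := by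
  have hf₀ := hf.continuousOn
  have hg₀ := hg.continuousOn
  have hf₁ := (hf.contDiffOn_derivWithin_Icc hab).continuousOn
  have hg₁ := (hg.contDiffOn_derivWithin_Icc hab).continuousOn
  have hf₂ := hf.continuousOn_derivWithin_derivWithin_Icc hab
  have hg₂ := hg.continuousOn_derivWithin_derivWithin_Icc hab
  have h₀ : normC0 a b (f * g) ≤ normC0 a b f * normC0 a b g :=
    normC0_le hab.le fun _ hx => abs_mul_le_normC0_mul hf₀ hg₀ hx
  have h₁ : normC0 a b (derivWithin (f * g) (Icc a b)) ≤
      normC0 a b (derivWithin f (Icc a b)) * normC0 a b g +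
        normC0 a b f * normC0 a b (derivWithin g (Icc a b)) := by
    refine normC0_le hab.le fun x hx => ?_
    rw [derivWithin_mul (hf.differentiableOn two_ne_zero x hx)
      (hg.differentiableOn two_ne_zero x hx)]
    exact (abs_add_le _ _).trans
      (add_le_add (abs_mul_le_normC0_mul hf₁ hg₀ hx) (abs_mul_le_normC0_mul hf₀ hg₁ hx))
  have h₂ : normC0 a b (derivWithin (derivWithin (f * g) (Icc a b)) (Icc a b)) ≤
      normC0 a b (derivWithin (derivWithin f (Icc a b)) (Icc a b)) * normC0 a b g +
        2 * (normC0 a b (derivWithin f (Icc a b)) * normC0 a b (derivWithin g (Icc a b))) +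
        normC0 a b f * normC0 a b (derivWithin (derivWithin g (Icc a b)) (Icc a b)) := by
    refine normC0_le hab.le fun x hx => ?_
    rw [derivWithin_derivWithin_mul hab hf hg hx]
    refine (abs_add_three _ _ _).trans ?_
    rw [abs_mul 2, abs_two]
    gcongr
    exacts [abs_mul_le_normC0_mul hf₂ hg₀ hx, abs_mul_le_normC0_mul hf₁ hg₁ hx,
      abs_mul_le_normC0_mul hf₀ hg₂ hx]
  have : 0 ≤ normC0 a b f * normC0 a b g := mul_nonneg normC0_nonneg normC0_nonneg
  unfold normC2
  linarith

end ContDiffOnIcc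

theorem stmt3 (a b : ℝ) (hab : a < b) :
    ∃ D₀ : ℝ, 0 < D₀ ∧ ∀ f g : ℝ → ℝ,
      ContDiffOn ℝ 2 f (Icc a b) → ContDiffOn ℝ 2 g (Icc a b) →
      normC2 a b f ≠ 0 → normC2 a b g ≠ 0 →
      normC2 a b (f * g) ≤ D₀ * normC2 a b f * normC2 a b g *
        (Real.sqrt (normC0 a b f / normC2 a b f) + Real.sqrt (normC0 a b g / normC2 a b g)) := by
  have hK : 0 ≤ 2 / (b - a) + (b - a) := by
    have := sub_pos.2 hab
    positivity
  refine ⟨1 + 2 * (2 / (b - a) + (b - a)) ^ 2, by positivity, fun f g hf hg _ _ => ?_⟩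
  exact (normC2_mul_le hab hf hg).trans <|
    add_add_two_mul_le_mul_add_sqrt_div hK normC0_nonneg normC0_le_normC2 normC0_nonneg
      normC0_le_normC2 (normC0_derivWithin_le hab hf) normC0_nonneg (normC0_derivWithin_le hab hg)
end

section
/- Let A, M, B be Banach algebras with A a subalgebra of M and M a subalgebra of B. Suppose there exist θ₀, θ₁ ∈ (0,1] and constants D₀, D₁ > 0 such that (i) ‖XY‖_A ≤ D₀‖X‖_A‖Y‖_A((‖X‖_M/‖X‖_A)^{θ₀} + (‖Y‖_M/‖Y‖_A)^{θ₀}) for all X, Y ∈ A, and (ii) ‖X‖_M ≤ D₁‖X‖_A^{1−θ₁}‖X‖_B^{θ₁} for all X ∈ A. Then A is a differential subalgebra of order θ₀θ₁ in B: ‖XY‖_A ≤ D₀D₁^{θ₀}‖X‖_A‖Y‖_A((‖X‖_B/‖X‖_A)^{θ₀θ₁} + (‖Y‖_B/‖Y‖_A)^{θ₀θ₁}) for all nonzero X, Y ∈ A. -/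
theorem stmt4 {A : Type*} [Ring A] (nA nM nB : A → ℝ)
    (hA0 : ∀ X, 0 ≤ nA X) (hM0 : ∀ X, 0 ≤ nM X) (hB0 : ∀ X, 0 ≤ nB X)
    (θ₀ θ₁ D₀ D₁ : ℝ) (hθ₀ : θ₀ ∈ Set.Ioc (0 : ℝ) 1) (hθ₁ : θ₁ ∈ Set.Ioc (0 : ℝ) 1)
    (hD₀ : 0 < D₀) (hD₁ : 0 < D₁)
    (h1 : ∀ X Y : A, nA (X * Y) ≤ D₀ * nA X * nA Y * ((nM X / nA X) ^ θ₀ + (nM Y / nA Y) ^ θ₀))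
    (h2 : ∀ X : A, nM X ≤ D₁ * nA X ^ (1 - θ₁) * nB X ^ θ₁) :
    ∀ X Y : A, nA X ≠ 0 → nA Y ≠ 0 →
      nA (X * Y) ≤ D₀ * D₁ ^ θ₀ * nA X * nA Y *
        ((nB X / nA X) ^ (θ₀ * θ₁) + (nB Y / nA Y) ^ (θ₀ * θ₁)) := by
  intro X Y hX hY
  have key : ∀ Z : A, nA Z ≠ 0 →
      (nM Z / nA Z) ^ θ₀ ≤ D₁ ^ θ₀ * (nB Z / nA Z) ^ (θ₀ * θ₁) := by
    intro Z hZ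
    have hZpos : 0 < nA Z := lt_of_le_of_ne (hA0 Z) (Ne.symm hZ)
    have step1 : nM Z / nA Z ≤ D₁ * (nB Z / nA Z) ^ θ₁ := by
      rw [div_le_iff₀ hZpos]
      calc nM Z ≤ D₁ * nA Z ^ (1 - θ₁) * nB Z ^ θ₁ := h2 Z
        _ = D₁ * (nB Z / nA Z) ^ θ₁ * nA Z := by
            rw [Real.div_rpow (hB0 Z) (hA0 Z), Real.rpow_sub hZpos, Real.rpow_one]
            field_simp
    have := Real.rpow_le_rpow (div_nonneg (hM0 Z) (hA0 Z)) step1 hθ₀.1.le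
    calc (nM Z / nA Z) ^ θ₀ ≤ (D₁ * (nB Z / nA Z) ^ θ₁) ^ θ₀ := this
      _ = D₁ ^ θ₀ * (nB Z / nA Z) ^ (θ₀ * θ₁) := by
          rw [Real.mul_rpow hD₁.le (Real.rpow_nonneg (div_nonneg (hB0 Z) (hA0 Z)) _),
            ← Real.rpow_mul (div_nonneg (hB0 Z) (hA0 Z)), mul_comm θ₁ θ₀]
  calc nA (X * Y) ≤ D₀ * nA X * nA Y * ((nM X / nA X) ^ θ₀ + (nM Y / nA Y) ^ θ₀) := h1 X Y
    _ ≤ D₀ * nA X * nA Y *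
        (D₁ ^ θ₀ * (nB X / nA X) ^ (θ₀ * θ₁) + D₁ ^ θ₀ * (nB Y / nA Y) ^ (θ₀ * θ₁)) := by
        have hXp : 0 < nA X := lt_of_le_of_ne (hA0 X) (Ne.symm hX)
        have hYp : 0 < nA Y := lt_of_le_of_ne (hA0 Y) (Ne.symm hY)
        gcongr
        · exact key X hX
        · exact key Y hY
    _ = D₀ * D₁ ^ θ₀ * nA X * nA Y *
        ((nB X / nA X) ^ (θ₀ * θ₁) + (nB Y / nA Y) ^ (θ₀ * θ₁)) := by ring
end

section
/- For infinite matrices A = (a(i,j)) and B = (b(i,j)) with finite A_{p,α} norm (1 ≤ p ≤ ∞, α ≥ 0), the product C = AB satisfies ‖C‖_{A_{p,α}} ≤ 2^α (‖A‖_{A_{p,α}}‖B‖_{A_{1,0}} + ‖A‖_{A_{1,0}}‖B‖_{A_{p,α}}). -/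
open scoped ENNReal

noncomputable def schurNormE (p : ℝ≥0∞) (α : ℝ) (a : ℤ → ℤ → ℝ) : ℝ≥0∞ :=
  if p = ⊤ then
    ⨆ i : ℤ, ⨆ j : ℤ,
      ENNReal.ofReal |a i j| * ENNReal.ofReal (((1 + |i - j| : ℤ) : ℝ) ^ α)
  else
    max
      (⨆ i : ℤ, (∑' j : ℤ,
        (ENNReal.ofReal |a i j| *
          ENNReal.ofReal (((1 + |i - j| : ℤ) : ℝ) ^ α)) ^ p.toReal) ^ (1 / p.toReal))
      (⨆ j : ℤ, (∑' i : ℤ,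
        (ENNReal.ofReal |a i j| *
          ENNReal.ofReal (((1 + |i - j| : ℤ) : ℝ) ^ α)) ^ p.toReal) ^ (1 / p.toReal))

/-!
With `w(i,j) = (1 + |i - j|)^α`, the weight inequality gives, entrywise,
`|c(i,j)| w(i,j) ≤ 2^α Σₖ (|a(i,k)| w(i,k) |b(k,j)| + |a(i,k)| |b(k,j)| w(k,j))`.
For a fixed row `i`, the first sum is the weighted row of `A` acted on by `|B|`, whose row and
column sums are at most `‖B‖_{A_{1,0}}`, so Schur's test bounds its `ℓᵖ` norm; the second sum is
an `ℓ¹`-combination, with coefficients `|a(i,k)|`, of weighted rows of `B`. Both estimates come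
from the Jensen-type inequality `(Σ w f)^p ≤ (Σ w)^(p-1) Σ w f^p`. Columns of `AB` are rows of
`BᵀAᵀ`, and the case `p = ∞` is a direct entrywise bound.
-/

open MeasureTheory

namespace ENNReal

variable {ι κ : Type*}

theorem inner_le_Lp_mul_Lq_tsum {p q : ℝ} (hpq : p.HolderConjugate q) (f g : ι → ℝ≥0∞) :
    ∑' i, f i * g i ≤ (∑' i, f i ^ p) ^ (1 / p) * (∑' i, g i ^ q) ^ (1 / q) := by
  let _ : MeasurableSpace ι := ⊤
  simpa only [Pi.mul_apply, lintegral_count] using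
    lintegral_mul_le_Lp_mul_Lq (Measure.count : Measure ι) hpq
      Measurable.of_discrete.aemeasurable Measurable.of_discrete.aemeasurable

theorem Lp_add_le_tsum {p : ℝ} (hp : 1 ≤ p) (f g : ι → ℝ≥0∞) :
    (∑' i, (f i + g i) ^ p) ^ (1 / p) ≤
      (∑' i, f i ^ p) ^ (1 / p) + (∑' i, g i ^ p) ^ (1 / p) := by
  let _ : MeasurableSpace ι := ⊤
  simpa only [Pi.add_apply, lintegral_count] using
    lintegral_Lp_add_le (μ := (Measure.count : Measure ι))
      Measurable.of_discrete.aemeasurable Measurable.of_discrete.aemeasurable hp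

theorem Lp_const_mul_tsum {p : ℝ} (hp : 0 < p) (c : ℝ≥0∞) (f : ι → ℝ≥0∞) :
    (∑' i, (c * f i) ^ p) ^ (1 / p) = c * (∑' i, f i ^ p) ^ (1 / p) := by
  simp_rw [mul_rpow_of_nonneg _ _ hp.le, ENNReal.tsum_mul_left,
    mul_rpow_of_nonneg _ _ (one_div_nonneg.2 hp.le), ← rpow_mul, mul_one_div_cancel hp.ne',
    rpow_one]

theorem rpow_sub_one_mul_self {p : ℝ} (hp : 1 ≤ p) (x : ℝ≥0∞) : x ^ (p - 1) * x = x ^ p := by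
  conv_rhs => rw [← sub_add_cancel p 1]
  rw [rpow_add_of_nonneg _ _ (by linarith) zero_le_one, rpow_one]

theorem tsum_mul_rpow_le {p : ℝ} (hp : 1 ≤ p) (w f : ι → ℝ≥0∞) :
    (∑' i, w i * f i) ^ p ≤ (∑' i, w i) ^ (p - 1) * ∑' i, w i * f i ^ p := by
  rcases hp.eq_or_lt with rfl | hp
  · simp
  have hpq : p.HolderConjugate p.conjExponent := .conjExponent hp
  have hp0 : 0 < p := by linarith
  set q := p.conjExponent
  -- Hölder applied to `w * f = w ^ (1 / q) * (w ^ (1 / p) * f)`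
  have hsplit : ∀ i, w i * f i = w i ^ (1 / q) * (w i ^ (1 / p) * f i) := fun i => by
    rw [← mul_assoc, ← rpow_add_of_nonneg _ _ hpq.symm.one_div_nonneg hpq.one_div_nonneg,
      one_div, one_div, hpq.symm.inv_add_inv_eq_one, rpow_one]
  have hpow : ∀ i, (w i ^ (1 / p) * f i) ^ p = w i * f i ^ p := fun i => by
    rw [mul_rpow_of_nonneg _ _ hp0.le, ← rpow_mul, one_div_mul_cancel hp0.ne', rpow_one]
  calc (∑' i, w i * f i) ^ p
      ≤ ((∑' i, (w i ^ (1 / q)) ^ q) ^ (1 / q) *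
          (∑' i, (w i ^ (1 / p) * f i) ^ p) ^ (1 / p)) ^ p := by
        rw [tsum_congr hsplit]
        exact rpow_le_rpow (inner_le_Lp_mul_Lq_tsum hpq.symm _ _) hp0.le
    _ = (∑' i, w i) ^ (p - 1) * ∑' i, w i * f i ^ p := by
        simp_rw [hpow, ← rpow_mul, one_div_mul_cancel hpq.symm.ne_zero, rpow_one,
          mul_rpow_of_nonneg _ _ hp0.le, ← rpow_mul, one_div_mul_cancel hp0.ne', rpow_one,
          one_div_mul_eq_div, hpq.div_conj_eq_sub_one]

theorem schur_test {p : ℝ} (hp : 1 ≤ p) (f : ι → ℝ≥0∞) (M : ι → κ → ℝ≥0∞) {K : ℝ≥0∞}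
    (hrow : ∀ i, ∑' j, M i j ≤ K) (hcol : ∀ j, ∑' i, M i j ≤ K) :
    ∑' j, (∑' i, f i * M i j) ^ p ≤ K ^ p * ∑' i, f i ^ p := by
  calc ∑' j, (∑' i, f i * M i j) ^ p
      ≤ ∑' j, (∑' i, M i j) ^ (p - 1) * ∑' i, M i j * f i ^ p := by
        simp_rw [mul_comm (f _)]
        exact ENNReal.tsum_le_tsum fun j => tsum_mul_rpow_le hp _ _
    _ ≤ ∑' j, K ^ (p - 1) * ∑' i, M i j * f i ^ p := by
        gcongr with j
        exact hcol j
    _ = K ^ (p - 1) * ∑' i, (∑' j, M i j) * f i ^ p := by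
        rw [ENNReal.tsum_mul_left, ENNReal.tsum_comm]
        simp_rw [ENNReal.tsum_mul_right]
    _ ≤ K ^ (p - 1) * ∑' i, K * f i ^ p := by
        gcongr with i
        exact hrow i
    _ = K ^ p * ∑' i, f i ^ p := by
        rw [ENNReal.tsum_mul_left, ← mul_assoc, rpow_sub_one_mul_self hp]

theorem tsum_rpow_tsum_mul_le {p : ℝ} (hp : 1 ≤ p) (f : ι → ℝ≥0∞) (h : ι → κ → ℝ≥0∞)
    {N : ℝ≥0∞} (hN : ∀ i, ∑' j, h i j ^ p ≤ N) :
    ∑' j, (∑' i, f i * h i j) ^ p ≤ (∑' i, f i) ^ p * N := by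
  calc ∑' j, (∑' i, f i * h i j) ^ p
      ≤ ∑' j, (∑' i, f i) ^ (p - 1) * ∑' i, f i * h i j ^ p :=
        ENNReal.tsum_le_tsum fun j => tsum_mul_rpow_le hp _ _
    _ = (∑' i, f i) ^ (p - 1) * ∑' i, f i * ∑' j, h i j ^ p := by
        rw [ENNReal.tsum_mul_left, ENNReal.tsum_comm]
        simp_rw [ENNReal.tsum_mul_left]
    _ ≤ (∑' i, f i) ^ (p - 1) * ∑' i, f i * N := by
        gcongr with i
        exact hN i
    _ = (∑' i, f i) ^ p * N := by
        rw [ENNReal.tsum_mul_right, ← mul_assoc, rpow_sub_one_mul_self hp]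

end ENNReal

theorem Real.add_rpow_le_two_rpow_mul {x y α : ℝ} (hx : 0 ≤ x) (hy : 0 ≤ y) (hα : 0 ≤ α) :
    (x + y) ^ α ≤ 2 ^ α * (x ^ α + y ^ α) := by
  have hmax : max x y ^ α ≤ x ^ α + y ^ α := by
    rcases le_total x y with h | h
    · simpa [max_eq_right h] using Real.rpow_nonneg hx α
    · simpa [max_eq_left h] using Real.rpow_nonneg hy α
  calc (x + y) ^ α ≤ (2 * max x y) ^ α := by
        gcongr
        linarith [le_max_left x y, le_max_right x y]
    _ = 2 ^ α * max x y ^ α := Real.mul_rpow zero_le_two (le_max_of_le_left hx)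
    _ ≤ 2 ^ α * (x ^ α + y ^ α) := by gcongr

noncomputable def polyWeight (α : ℝ) (i j : ℤ) : ℝ≥0∞ :=
  ENNReal.ofReal (((1 + |i - j| : ℤ) : ℝ) ^ α)

noncomputable def weightedEntry (α : ℝ) (a : ℤ → ℤ → ℝ) (i j : ℤ) : ℝ≥0∞ :=
  ENNReal.ofReal |a i j| * polyWeight α i j

noncomputable def rowNorm (q α : ℝ) (a : ℤ → ℤ → ℝ) : ℝ≥0∞ :=
  ⨆ i, (∑' j, weightedEntry α a i j ^ q) ^ (1 / q)

def transpose (a : ℤ → ℤ → ℝ) : ℤ → ℤ → ℝ :=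
  fun i j => a j i

theorem transpose_transpose (a : ℤ → ℤ → ℝ) : transpose (transpose a) = a := rfl

noncomputable def tsumMul (a b : ℤ → ℤ → ℝ) : ℤ → ℤ → ℝ :=
  fun i j => ∑' k, a i k * b k j

theorem polyWeight_comm (α : ℝ) (i j : ℤ) : polyWeight α i j = polyWeight α j i := by
  rw [polyWeight, polyWeight, abs_sub_comm]

theorem polyWeight_le_two_rpow_mul {α : ℝ} (hα : 0 ≤ α) (i j k : ℤ) :
    polyWeight α i j ≤ ENNReal.ofReal (2 ^ α) * (polyWeight α i k + polyWeight α k j) := by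
  have hdist : ((1 + |i - j| : ℤ) : ℝ) ≤ ((1 + |i - k| : ℤ) : ℝ) + ((1 + |k - j| : ℤ) : ℝ) := by
    have := abs_sub_le i k j
    push_cast
    exact_mod_cast (by linarith : 1 + |i - j| ≤ 1 + |i - k| + (1 + |k - j|))
  unfold polyWeight
  rw [← ENNReal.ofReal_add (by positivity) (by positivity),
    ← ENNReal.ofReal_mul (by positivity)]
  gcongr
  exact (Real.rpow_le_rpow (by positivity) hdist hα).trans
    (Real.add_rpow_le_two_rpow_mul (by positivity) (by positivity) hα)

theorem weightedEntry_transpose (α : ℝ) (a : ℤ → ℤ → ℝ) (i j : ℤ) :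
    weightedEntry α (transpose a) i j = weightedEntry α a j i := by
  rw [weightedEntry, weightedEntry, transpose, polyWeight_comm]

theorem schurNormE_top (α : ℝ) (a : ℤ → ℤ → ℝ) :
    schurNormE ⊤ α a = ⨆ i, ⨆ j, weightedEntry α a i j := by
  rw [schurNormE, if_pos rfl]
  rfl

theorem schurNormE_of_ne_top {p : ℝ≥0∞} (hp : p ≠ ⊤) (α : ℝ) (a : ℤ → ℤ → ℝ) :
    schurNormE p α a = max (rowNorm p.toReal α a) (rowNorm p.toReal α (transpose a)) := by
  simp_rw [schurNormE, if_neg hp, rowNorm, weightedEntry_transpose]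
  rfl

theorem schurNormE_transpose {p : ℝ≥0∞} (hp : p ≠ ⊤) (α : ℝ) (a : ℤ → ℤ → ℝ) :
    schurNormE p α (transpose a) = schurNormE p α a := by
  rw [schurNormE_of_ne_top hp, schurNormE_of_ne_top hp, transpose_transpose, max_comm]

theorem rowNorm_le_schurNormE {p : ℝ≥0∞} (hp : p ≠ ⊤) (α : ℝ) (a : ℤ → ℤ → ℝ) :
    rowNorm p.toReal α a ≤ schurNormE p α a :=
  (schurNormE_of_ne_top hp α a).ge.trans' (le_max_left _ _)

theorem tsum_rpow_weightedEntry_le_rowNorm {q : ℝ} (hq : 0 < q) (α : ℝ) (a : ℤ → ℤ → ℝ)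
    (i : ℤ) : ∑' j, weightedEntry α a i j ^ q ≤ rowNorm q α a ^ q := by
  rw [← ENNReal.rpow_inv_le_iff hq, ← one_div]
  exact le_iSup (fun i => (∑' j, weightedEntry α a i j ^ q) ^ (1 / q)) i

theorem tsum_row_le_schurNormE_one_zero (a : ℤ → ℤ → ℝ) (i : ℤ) :
    ∑' j, ENNReal.ofReal |a i j| ≤ schurNormE 1 0 a := by
  have := tsum_rpow_weightedEntry_le_rowNorm one_pos 0 a i
  simp only [weightedEntry, polyWeight, Real.rpow_zero, ENNReal.ofReal_one, mul_one,
    ENNReal.rpow_one] at this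
  exact this.trans (by simpa using rowNorm_le_schurNormE ENNReal.one_ne_top 0 a)

theorem tsum_col_le_schurNormE_one_zero (a : ℤ → ℤ → ℝ) (j : ℤ) :
    ∑' i, ENNReal.ofReal |a i j| ≤ schurNormE 1 0 a := by
  rw [← schurNormE_transpose ENNReal.one_ne_top]
  exact tsum_row_le_schurNormE_one_zero (transpose a) j

theorem transpose_tsumMul (a b : ℤ → ℤ → ℝ) :
    transpose (tsumMul a b) = tsumMul (transpose b) (transpose a) := by
  ext i j
  exact tsum_congr fun k => mul_comm _ _

theorem weightedEntry_tsumMul_le {α : ℝ} (hα : 0 ≤ α) (a b : ℤ → ℤ → ℝ) (i j : ℤ) :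
    weightedEntry α (tsumMul a b) i j ≤ ENNReal.ofReal (2 ^ α) *
      (∑' k, weightedEntry α a i k * ENNReal.ofReal |b k j| +
        ∑' k, ENNReal.ofReal |a i k| * weightedEntry α b k j) := by
  have habs : ENNReal.ofReal |tsumMul a b i j| ≤
      ∑' k, ENNReal.ofReal |a i k| * ENNReal.ofReal |b k j| := by
    simp_rw [← ENNReal.ofReal_mul (abs_nonneg _), ← abs_mul, ← Real.enorm_eq_ofReal_abs]
    exact enorm_tsum_le_tsum_enorm
  calc weightedEntry α (tsumMul a b) i j
      ≤ ∑' k, ENNReal.ofReal |a i k| * ENNReal.ofReal |b k j| * polyWeight α i j := by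
        rw [ENNReal.tsum_mul_right]
        exact mul_le_mul_left habs _
    _ ≤ ∑' k, ENNReal.ofReal |a i k| * ENNReal.ofReal |b k j| *
          (ENNReal.ofReal (2 ^ α) * (polyWeight α i k + polyWeight α k j)) := by
        gcongr with k
        exact polyWeight_le_two_rpow_mul hα i j k
    _ = _ := by
        rw [← ENNReal.tsum_add, ← ENNReal.tsum_mul_left]
        exact tsum_congr fun k => by simp only [weightedEntry]; ring

theorem schurNormE_top_tsumMul_le {α : ℝ} (hα : 0 ≤ α) (a b : ℤ → ℤ → ℝ) :
    schurNormE ⊤ α (tsumMul a b) ≤ ENNReal.ofReal (2 ^ α) *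
      (schurNormE ⊤ α a * schurNormE 1 0 b + schurNormE 1 0 a * schurNormE ⊤ α b) := by
  have hentry : ∀ a i j, weightedEntry α a i j ≤ schurNormE ⊤ α a := fun a i j => by
    rw [schurNormE_top]
    exact le_iSup₂ (f := fun i j => weightedEntry α a i j) i j
  rw [schurNormE_top]
  refine iSup₂_le fun i j => (weightedEntry_tsumMul_le hα a b i j).trans ?_
  gcongr
  · calc ∑' k, weightedEntry α a i k * ENNReal.ofReal |b k j|
        ≤ ∑' k, schurNormE ⊤ α a * ENNReal.ofReal |b k j| := by
          gcongr with k
          exact hentry a i k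
      _ ≤ schurNormE ⊤ α a * schurNormE 1 0 b := by
          rw [ENNReal.tsum_mul_left]
          exact mul_le_mul_right (tsum_col_le_schurNormE_one_zero b j) _
  · calc ∑' k, ENNReal.ofReal |a i k| * weightedEntry α b k j
        ≤ ∑' k, ENNReal.ofReal |a i k| * schurNormE ⊤ α b := by
          gcongr with k
          exact hentry b k j
      _ ≤ schurNormE 1 0 a * schurNormE ⊤ α b := by
          rw [ENNReal.tsum_mul_right]
          exact mul_le_mul_left (tsum_row_le_schurNormE_one_zero a i) _

theorem rowNorm_tsumMul_le {q α : ℝ} (hq : 1 ≤ q) (hα : 0 ≤ α) (a b : ℤ → ℤ → ℝ) :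
    rowNorm q α (tsumMul a b) ≤ ENNReal.ofReal (2 ^ α) *
      (rowNorm q α a * schurNormE 1 0 b + schurNormE 1 0 a * rowNorm q α b) := by
  have hq0 : 0 < q := by linarith
  refine iSup_le fun i => ?_
  set X : ℤ → ℝ≥0∞ := fun j => ∑' k, weightedEntry α a i k * ENNReal.ofReal |b k j|
  set Y : ℤ → ℝ≥0∞ := fun j => ∑' k, ENNReal.ofReal |a i k| * weightedEntry α b k j
  have hX : (∑' j, X j ^ q) ^ (1 / q) ≤ rowNorm q α a * schurNormE 1 0 b := by
    rw [one_div, ENNReal.rpow_inv_le_iff hq0, ENNReal.mul_rpow_of_nonneg _ _ hq0.le, mul_comm]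
    refine (ENNReal.schur_test hq _ _ (tsum_row_le_schurNormE_one_zero b)
      (tsum_col_le_schurNormE_one_zero b)).trans ?_
    gcongr
    exact tsum_rpow_weightedEntry_le_rowNorm hq0 α a i
  have hY : (∑' j, Y j ^ q) ^ (1 / q) ≤ schurNormE 1 0 a * rowNorm q α b := by
    rw [one_div, ENNReal.rpow_inv_le_iff hq0, ENNReal.mul_rpow_of_nonneg _ _ hq0.le]
    refine (ENNReal.tsum_rpow_tsum_mul_le hq _ _
      (tsum_rpow_weightedEntry_le_rowNorm hq0 α b)).trans ?_
    gcongr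
    exact tsum_row_le_schurNormE_one_zero a i
  calc (∑' j, weightedEntry α (tsumMul a b) i j ^ q) ^ (1 / q)
      ≤ (∑' j, (ENNReal.ofReal (2 ^ α) * (X j + Y j)) ^ q) ^ (1 / q) := by
        gcongr with j
        exact weightedEntry_tsumMul_le hα a b i j
    _ ≤ ENNReal.ofReal (2 ^ α) * ((∑' j, X j ^ q) ^ (1 / q) + (∑' j, Y j ^ q) ^ (1 / q)) := by
        rw [ENNReal.Lp_const_mul_tsum hq0]
        exact mul_le_mul_right (ENNReal.Lp_add_le_tsum hq X Y) _
    _ ≤ _ := by gcongr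

theorem rowNorm_tsumMul_le_schurNormE {p : ℝ≥0∞} (hp : 1 ≤ p) (hp_top : p ≠ ⊤) {α : ℝ}
    (hα : 0 ≤ α) (a b : ℤ → ℤ → ℝ) :
    rowNorm p.toReal α (tsumMul a b) ≤ ENNReal.ofReal (2 ^ α) *
      (schurNormE p α a * schurNormE 1 0 b + schurNormE 1 0 a * schurNormE p α b) := by
  have hq : 1 ≤ p.toReal := by simpa using ENNReal.toReal_mono hp_top hp
  refine (rowNorm_tsumMul_le hq hα a b).trans ?_
  gcongr <;> exact rowNorm_le_schurNormE hp_top α _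

theorem stmt12_general (p : ℝ≥0∞) (hp : 1 ≤ p) (α : ℝ) (hα : 0 ≤ α) (a b : ℤ → ℤ → ℝ) :
    schurNormE p α (fun i j => ∑' k : ℤ, a i k * b k j) ≤
      ENNReal.ofReal ((2 : ℝ) ^ α) *
        (schurNormE p α a * schurNormE 1 0 b + schurNormE 1 0 a * schurNormE p α b) := by
  change schurNormE p α (tsumMul a b) ≤ _
  rcases eq_or_ne p ⊤ with rfl | hp_top
  · exact schurNormE_top_tsumMul_le hα a b
  rw [schurNormE_of_ne_top hp_top α (tsumMul a b)]
  refine max_le (rowNorm_tsumMul_le_schurNormE hp hp_top hα a b) ?_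
  have hcols := rowNorm_tsumMul_le_schurNormE hp hp_top hα (transpose b) (transpose a)
  rw [← transpose_tsumMul, schurNormE_transpose hp_top, schurNormE_transpose hp_top,
    schurNormE_transpose ENNReal.one_ne_top, schurNormE_transpose ENNReal.one_ne_top] at hcols
  exact hcols.trans_eq (by ring)

theorem stmt12 (p : ℝ≥0∞) (hp : 1 ≤ p) (α : ℝ) (hα : 0 ≤ α) (a b : ℤ → ℤ → ℝ)
    (ha : schurNormE p α a ≠ ⊤) (hb : schurNormE p α b ≠ ⊤) :
    schurNormE p α (fun i j => ∑' k : ℤ, a i k * b k j) ≤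
      ENNReal.ofReal ((2 : ℝ) ^ α) *
        (schurNormE p α a * schurNormE 1 0 b + schurNormE 1 0 a * schurNormE p α b) :=
  stmt12_general p hp α hα a b
end

section
/- Let m ≥ 2 be an integer and 0 < θ < m−1. Write n = Σ_{i=0}^{l} ε_i m^i in base m with ε_i ∈ {0,…,m−1} and ε_l ≥ 1. Then Σ_{k=0}^{l} ε_k (m−θ)^k ≤ (m−1)·(m−θ)/(m−1−θ) · n^{log_m(m−θ)}. -/
theorem stmt15 (m : ℕ) (hm : 2 ≤ m) (θ : ℝ) (hθ : 0 < θ) (hθ' : θ < (m : ℝ) - 1)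
    (n l : ℕ) (hn : 1 ≤ n) (ε : ℕ → ℕ)
    (hdig : ∀ i ≤ l, ε i ≤ m - 1) (hεl : 1 ≤ ε l)
    (hrep : n = ∑ i ∈ Finset.range (l + 1), ε i * m ^ i) :
    ∑ k ∈ Finset.range (l + 1), (ε k : ℝ) * ((m : ℝ) - θ) ^ k ≤
      ((m : ℝ) - 1) * ((m : ℝ) - θ) / ((m : ℝ) - 1 - θ) *
        (n : ℝ) ^ Real.logb (m : ℝ) ((m : ℝ) - θ) := by
  set b : ℝ := (m : ℝ) - θ with hbdef
  have hm1 : (1 : ℝ) < m := by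
    have : (2 : ℝ) ≤ m := by exact_mod_cast hm
    linarith
  have hb1 : 1 < b := by simp only [hbdef]; linarith
  have hb0 : 0 < b := by linarith
  set e : ℝ := Real.logb (m : ℝ) b with hedef
  have he : 0 < e := Real.logb_pos hm1 hb1
  -- m^l ≤ n
  have hmn : (m : ℕ) ^ l ≤ n := by
    calc m ^ l ≤ ε l * m ^ l := Nat.le_mul_of_pos_left _ hεl
    _ ≤ ∑ i ∈ Finset.range (l + 1), ε i * m ^ i := by
        apply Finset.single_le_sum (f := fun i => ε i * m ^ i)
        · intro i _; positivity
        · simp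
    _ = n := hrep.symm
  -- b^l ≤ n^e
  have key : b ^ l ≤ (n : ℝ) ^ e := by
    have h1 : b ^ l = ((m : ℝ) ^ l) ^ e := by
      have hmb : (m : ℝ) ^ e = b := Real.rpow_logb (by linarith) (ne_of_gt hm1) hb0
      rw [← hmb, ← Real.rpow_natCast ((m:ℝ)^e) l, ← Real.rpow_natCast (m:ℝ) l,
        ← Real.rpow_mul (by linarith), ← Real.rpow_mul (by linarith), mul_comm]
    rw [h1]
    apply Real.rpow_le_rpow (by positivity) _ he.le
    exact_mod_cast hmn
  -- bound the digits and sum geometric series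
  have hdigR : ∀ k ∈ Finset.range (l + 1), (ε k : ℝ) * b ^ k ≤ ((m : ℝ) - 1) * b ^ k := by
    intro k hk
    have hk' : k ≤ l := Nat.lt_succ_iff.mp (Finset.mem_range.mp hk)
    have : (ε k : ℝ) ≤ (m : ℝ) - 1 := by
      have := hdig k hk'
      have h2 : (ε k : ℝ) ≤ ((m - 1 : ℕ) : ℝ) := by exact_mod_cast this
      have : ((m - 1 : ℕ) : ℝ) = (m : ℝ) - 1 := by
        have : 1 ≤ m := by omega
        push_cast [this]; ring
      linarith
    have hbk : (0:ℝ) ≤ b ^ k := by positivity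
    nlinarith
  have hgeom : ∑ k ∈ Finset.range (l + 1), b ^ k = (b ^ (l + 1) - 1) / (b - 1) :=
    geom_sum_eq (ne_of_gt hb1) _
  have hden : (0:ℝ) < b - 1 := by linarith
  calc ∑ k ∈ Finset.range (l + 1), (ε k : ℝ) * b ^ k
      ≤ ∑ k ∈ Finset.range (l + 1), ((m : ℝ) - 1) * b ^ k := Finset.sum_le_sum hdigR
    _ = ((m : ℝ) - 1) * ((b ^ (l + 1) - 1) / (b - 1)) := by rw [← Finset.mul_sum, hgeom]
    _ = ((m : ℝ) - 1) * b / (b - 1) * (b ^ (l + 1) - 1) / b := by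
        field_simp
    _ ≤ ((m : ℝ) - 1) * b / (b - 1) * b ^ l := by
        have hc : (0:ℝ) ≤ ((m : ℝ) - 1) * b / (b - 1) :=
          div_nonneg (mul_nonneg (by linarith) hb0.le) hden.le
        have h : b ^ (l + 1) - 1 ≤ b ^ l * b := by rw [pow_succ]; linarith
        have h2 : ((m:ℝ)-1)*b/(b-1)*(b^(l+1)-1)/b ≤ ((m:ℝ)-1)*b/(b-1)*(b^l*b)/b := by
          gcongr
        have h3 : ((m:ℝ)-1)*b/(b-1)*(b^l*b)/b = ((m:ℝ)-1)*b/(b-1)*b^l := by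
          field_simp
        linarith
    _ ≤ ((m : ℝ) - 1) * b / (b - 1) * (n : ℝ) ^ e := by
        apply mul_le_mul_of_nonneg_left key
        exact div_nonneg (mul_nonneg (by linarith) hb0.le) hden.le
    _ = ((m : ℝ) - 1) * b / ((m : ℝ) - 1 - θ) * (n : ℝ) ^ e := by
        have hbm1 : b - 1 = (m : ℝ) - 1 - θ := by rw [hbdef]; ring
        rw [hbm1]
end
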